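/- Let π_n be defined by π_0(x)=1, π_1(x)=x-1, and π_{ν+1}(x) = (x-2)π_ν(x) - π_{ν-1}(x). Then the zeros of π_n are exactly x_ν = 4 sin²((2ν-1)π/(2(2n+1))) for ν = 1,…,n, and the smallest zero is 4 sin²(π/(2(2n+1))). -/
import Mathlib


open Polynomial

/-- Monic orthogonal polynomials: `π₀ = 1`, `π₁ = X - 1`,
`π_{ν+1} = (X - 2)π_ν - π_{ν-1}`. -/
noncomputable def piPoly : ℕ → Polynomial ℝ
  | 0 => 1
  | 1 => X - C (1 : ℝ)
  | (ν + 2) => (X - C (2 : ℝ)) * piPoly (ν + 1) - piPoly ν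

lemma piPoly_monic_natDegree (n : ℕ) : (piPoly n).Monic ∧ (piPoly n).natDegree = n := by
  induction n using Nat.twoStepInduction with
  | zero => exact ⟨monic_one, natDegree_one⟩
  | one => exact ⟨monic_X_sub_C 1, natDegree_X_sub_C 1⟩
  | more n ih1 ih2 =>
    obtain ⟨hm1, hd1⟩ := ih1
    obtain ⟨hm2, hd2⟩ := ih2
    have hmul : ((X - C (2:ℝ)) * piPoly (n+1)).Monic := (monic_X_sub_C 2).mul hm2
    have hdmul : ((X - C (2:ℝ)) * piPoly (n+1)).natDegree = n + 2 := by
      rw [natDegree_mul (X_sub_C_ne_zero 2) hm2.ne_zero, natDegree_X_sub_C, hd2]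
      ring
    have hlt : (piPoly n).degree < ((X - C (2:ℝ)) * piPoly (n+1)).degree := by
      rw [degree_eq_natDegree hmul.ne_zero, hdmul]
      calc (piPoly n).degree ≤ (n : WithBot ℕ) := by
            simpa [hd1] using degree_le_natDegree (p := piPoly n)
        _ < ((n + 2 : ℕ) : WithBot ℕ) := by exact_mod_cast Nat.lt_add_of_pos_right two_pos
    have hltn : (piPoly n).natDegree < ((X - C (2:ℝ)) * piPoly (n+1)).natDegree := by
      rw [hdmul, hd1]; omega
    constructor
    · show (piPoly (n+2)).Monic
      have : piPoly (n+2) = (X - C (2:ℝ)) * piPoly (n+1) + (-(piPoly n)) := by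
        simp [piPoly]; ring
      rw [this]
      exact hmul.add_of_left (by simpa using hlt)
    · show (piPoly (n+2)).natDegree = n + 2
      have : piPoly (n+2) = (X - C (2:ℝ)) * piPoly (n+1) - piPoly n := by simp [piPoly]
      rw [this, natDegree_sub_eq_left_of_natDegree_lt hltn, hdmul]

lemma piPoly_eval_cos (n : ℕ) (t : ℝ) :
    Real.sin t * (piPoly n).eval (2 + 2 * Real.cos (2*t)) =
      Real.sin ((2*(n:ℝ)+1)*t) := by
  induction n using Nat.twoStepInduction with
  | zero => norm_num [piPoly]
  | one =>
    simp only [piPoly, eval_sub, eval_X, eval_C, Nat.cast_one]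
    have h3 : (2*(1:ℝ)+1)*t = 2*t + t := by ring
    rw [h3, Real.sin_add, Real.sin_two_mul, Real.cos_two_mul]
    ring
  | more n ih1 ih2 =>
    simp only [piPoly, eval_sub, eval_mul, eval_X, eval_C]
    have ha : (2*((n:ℝ)+2)+1)*t = (2*(n:ℝ)+3)*t + 2*t := by ring
    have hb : (2*(n:ℝ)+1)*t = (2*(n:ℝ)+3)*t - 2*t := by ring
    have hc : (2*((n:ℝ)+1)+1)*t = (2*(n:ℝ)+3)*t := by ring
    push_cast at ih1 ih2 ⊢
    rw [hc] at ih2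
    rw [hb, Real.sin_sub] at ih1
    rw [ha, Real.sin_add]
    linear_combination (2*Real.cos (2*t)) * ih2 - ih1

lemma piPoly_root (n ν : ℕ) (h1 : 1 ≤ ν) (h2 : ν ≤ n) :
    (piPoly n).eval (4 * Real.sin ((2*(ν:ℝ)-1)*Real.pi/(2*(2*(n:ℝ)+1)))^2) = 0 := by
  set t : ℝ := (2*(ν:ℝ)-1)*Real.pi/(2*(2*(n:ℝ)+1)) with ht
  have hν : (1:ℝ) ≤ (ν:ℝ) := by exact_mod_cast h1
  have hνn : (ν:ℝ) ≤ (n:ℝ) := by exact_mod_cast h2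
  have hden : (0:ℝ) < 2*(2*(n:ℝ)+1) := by positivity
  have hp := Real.pi_pos
  have ht0 : 0 ≤ t := by
    apply div_nonneg _ hden.le
    have h' : (0:ℝ) ≤ 2*(ν:ℝ)-1 := by linarith
    positivity
  have htlt : t < Real.pi/2 := by
    rw [ht, div_lt_iff₀ hden]
    nlinarith
  have key := piPoly_eval_cos n (Real.pi/2 - t)
  have harg : 2 + 2*Real.cos (2*(Real.pi/2 - t)) = 4*Real.sin t^2 := by
    have h2' : 2*(Real.pi/2 - t) = Real.pi - 2*t := by ring
    rw [h2', Real.cos_pi_sub, Real.cos_two_mul']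
    have := Real.sin_sq_add_cos_sq t
    nlinarith
  have hzero : Real.sin ((2*(n:ℝ)+1)*(Real.pi/2 - t)) = 0 := by
    have he : (2*(n:ℝ)+1)*(Real.pi/2 - t) = ((n+1-ν : ℕ):ℝ) * Real.pi := by
      rw [Nat.cast_sub (by omega : ν ≤ n+1), ht]
      push_cast
      field_simp
      ring
    rw [he]; exact Real.sin_nat_mul_pi _
  rw [harg, hzero, Real.sin_pi_div_two_sub] at key
  have hcos : 0 < Real.cos t := Real.cos_pos_of_mem_Ioo ⟨by linarith, htlt⟩
  exact (mul_eq_zero.mp key).resolve_left hcos.ne'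

lemma piPoly_val_lt (n : ℕ) {a b : ℕ} (ha : 1 ≤ a) (hab : a < b) (hb : b ≤ n) :
    4 * Real.sin ((2*(a:ℝ)-1)*Real.pi/(2*(2*(n:ℝ)+1)))^2
      < 4 * Real.sin ((2*(b:ℝ)-1)*Real.pi/(2*(2*(n:ℝ)+1)))^2 := by
  set ta : ℝ := (2*(a:ℝ)-1)*Real.pi/(2*(2*(n:ℝ)+1)) with hta
  set tb : ℝ := (2*(b:ℝ)-1)*Real.pi/(2*(2*(n:ℝ)+1)) with htb
  have hp := Real.pi_pos
  have hden : (0:ℝ) < 2*(2*(n:ℝ)+1) := by positivity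
  have ha' : (1:ℝ) ≤ (a:ℝ) := by exact_mod_cast ha
  have hab' : (a:ℝ) < (b:ℝ) := by exact_mod_cast hab
  have hb' : (b:ℝ) ≤ (n:ℝ) := by exact_mod_cast hb
  have hta0 : 0 ≤ ta := by
    apply div_nonneg _ hden.le
    have h' : (0:ℝ) ≤ 2*(a:ℝ)-1 := by linarith
    positivity
  have htab : ta < tb := by
    rw [hta, htb]
    have h' : (2*(a:ℝ)-1)*Real.pi < (2*(b:ℝ)-1)*Real.pi := by nlinarith
    exact div_lt_div_of_pos_right h' hden
  have htblt : tb < Real.pi/2 := by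
    rw [htb, div_lt_iff₀ hden]
    nlinarith
  have hsin : Real.sin ta < Real.sin tb :=
    Real.strictMonoOn_sin ⟨by linarith, by linarith⟩ ⟨by linarith, by linarith⟩ htab
  have hsa : 0 ≤ Real.sin ta := Real.sin_nonneg_of_nonneg_of_le_pi hta0 (by linarith)
  nlinarith [hsin, hsa]

theorem piPoly_zeros (n : ℕ) (hn : 1 ≤ n) :
    {x : ℝ | (piPoly n).eval x = 0} =
      {x : ℝ | ∃ ν ∈ Finset.Icc 1 n,
        x = 4 * Real.sin ((2 * (ν : ℝ) - 1) * Real.pi / (2 * (2 * n + 1))) ^ 2} ∧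
    IsLeast {x : ℝ | (piPoly n).eval x = 0}
      (4 * Real.sin (Real.pi / (2 * (2 * n + 1))) ^ 2) := by
  obtain ⟨hmon, hdeg⟩ := piPoly_monic_natDegree n
  have hne : piPoly n ≠ 0 := hmon.ne_zero
  set f : ℕ → ℝ :=
    fun ν => 4 * Real.sin ((2 * (ν : ℝ) - 1) * Real.pi / (2 * (2 * (n : ℝ) + 1))) ^ 2 with hfdef
  have hinj : Set.InjOn f ↑(Finset.Icc 1 n) := by
    intro a ha b hb hab
    simp only [Finset.coe_Icc, Set.mem_Icc] at ha hb
    by_contra hne'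
    rcases lt_or_gt_of_ne hne' with h | h
    · exact absurd hab (piPoly_val_lt n ha.1 h hb.2).ne
    · exact absurd hab.symm (piPoly_val_lt n hb.1 h ha.2).ne
  set S : Finset ℝ := (Finset.Icc 1 n).image f with hS
  have hsub : S ⊆ (piPoly n).roots.toFinset := by
    intro x hx
    rw [hS, Finset.mem_image] at hx
    obtain ⟨ν, hν, rfl⟩ := hx
    rw [Finset.mem_Icc] at hν
    exact Multiset.mem_toFinset.mpr ((mem_roots hne).mpr (piPoly_root n ν hν.1 hν.2))
  have hScard : S.card = n := by
    rw [hS, Finset.card_image_of_injOn hinj, Nat.card_Icc]; omega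
  have hRcard : (piPoly n).roots.toFinset.card ≤ n :=
    (Multiset.toFinset_card_le _).trans ((piPoly n).card_roots'.trans_eq hdeg)
  have hSeq : S = (piPoly n).roots.toFinset :=
    Finset.eq_of_subset_of_card_le hsub (hRcard.trans hScard.ge)
  have hset : {x : ℝ | (piPoly n).eval x = 0} =
      {x : ℝ | ∃ ν ∈ Finset.Icc 1 n, x = f ν} := by
    ext x
    simp only [Set.mem_setOf_eq]
    constructor
    · intro hx
      have hx' : x ∈ S := by
        rw [hSeq]
        exact Multiset.mem_toFinset.mpr ((mem_roots hne).mpr hx)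
      rw [hS, Finset.mem_image] at hx'
      obtain ⟨ν, hν, hfx⟩ := hx'
      exact ⟨ν, hν, hfx.symm⟩
    · rintro ⟨ν, hν, rfl⟩
      rw [Finset.mem_Icc] at hν
      exact piPoly_root n ν hν.1 hν.2
  have hf1 : f 1 = 4 * Real.sin (Real.pi / (2 * (2 * (n : ℝ) + 1))) ^ 2 := by
    rw [hfdef]; norm_num
  refine ⟨hset, ?_, ?_⟩
  · show (piPoly n).eval _ = 0
    rw [← hf1]
    exact piPoly_root n 1 le_rfl hn
  · intro x hx
    rw [hset] at hx
    obtain ⟨ν, hν, rfl⟩ := hx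
    rw [Finset.mem_Icc] at hν
    rw [← hf1]
    rcases eq_or_lt_of_le hν.1 with h | h
    · rw [← h]
    · exact (piPoly_val_lt n le_rfl h hν.2).le
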